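/- arXiv:1204.4323 — 8 statements merged into one kernel-verified Lean document; each statement's English description precedes it below -/
import Mathlib

section
/- The function f(u) = sqrt(k(1 - k/u^2)) + sqrt((k/u)(1 - k/u)) defined for u in (sqrt(k), 1] with parameter k in (0,1) has nonnegative derivative at u if and only if u^2/(4k^2) - u/k + (1 - 1/(4k)) <= 0 or u <= 2k; equivalently, f is increasing on [2k - sqrt(k), 2k + sqrt(k)] intersected with its domain. -/
/-- The function `f(u) = sqrt(k(1 - k/u²)) + sqrt((k/u)(1 - k/u))`. -/
noncomputable def relayObjective (k u : ℝ) : ℝ :=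
  Real.sqrt (k * (1 - k / u ^ 2)) + Real.sqrt ((k / u) * (1 - k / u))

lemma relay_hasDerivAt (k u : ℝ) (hk0 : 0 < k) (hu0 : 0 < u) (hu2 : k < u ^ 2)
    (huk : k < u) :
    HasDerivAt (relayObjective k)
      ((2 * k ^ 2 / u ^ 3) / (2 * Real.sqrt (k * (1 - k / u ^ 2)))
        + (2 * k ^ 2 / u ^ 3 - k / u ^ 2) / (2 * Real.sqrt ((k / u) * (1 - k / u)))) u := by
  have hu0' : u ≠ 0 := hu0.ne'
  have ha : 0 < k * (1 - k / u ^ 2) := by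
    have h1 : k / u ^ 2 < 1 := (div_lt_one (by positivity)).2 hu2
    nlinarith
  have hb : 0 < (k / u) * (1 - k / u) := by
    have h1 : 0 < k / u := by positivity
    have h2 : k / u < 1 := (div_lt_one hu0).2 huk
    nlinarith
  have h1 : HasDerivAt (fun y : ℝ => k * (1 - k / y ^ 2))
      (k * (-((0 * u ^ 2 - k * (2 * u ^ 1)) / (u ^ 2) ^ 2))) u :=
    (((hasDerivAt_const u k).div (hasDerivAt_pow 2 u)
      (pow_ne_zero 2 hu0')).const_sub 1).const_mul k
  have H1 : HasDerivAt (fun y : ℝ => Real.sqrt (k * (1 - k / y ^ 2)))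
      (1 / (2 * Real.sqrt (k * (1 - k / u ^ 2)))
        * (k * (-((0 * u ^ 2 - k * (2 * u ^ 1)) / (u ^ 2) ^ 2)))) u :=
    (Real.hasDerivAt_sqrt ha.ne').comp u h1
  have hdiv : HasDerivAt (fun y : ℝ => k / y) ((0 * u - k * 1) / u ^ 2) u :=
    (hasDerivAt_const u k).div (hasDerivAt_id u) hu0'
  have h2 : HasDerivAt (fun y : ℝ => (k / y) * (1 - k / y))
      (((0 * u - k * 1) / u ^ 2) * (1 - k / u) + (k / u) * (-((0 * u - k * 1) / u ^ 2))) u :=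
    hdiv.mul (hdiv.const_sub 1)
  have H2 : HasDerivAt (fun y : ℝ => Real.sqrt ((k / y) * (1 - k / y)))
      (1 / (2 * Real.sqrt ((k / u) * (1 - k / u)))
        * (((0 * u - k * 1) / u ^ 2) * (1 - k / u) + (k / u) * (-((0 * u - k * 1) / u ^ 2)))) u :=
    (Real.hasDerivAt_sqrt hb.ne').comp u h2
  have H := H1.add H2
  have hAne : Real.sqrt (k * (1 - k / u ^ 2)) ≠ 0 := (Real.sqrt_pos.2 ha).ne'
  have hBne : Real.sqrt ((k / u) * (1 - k / u)) ≠ 0 := (Real.sqrt_pos.2 hb).ne'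
  have e1 : k * (-((0 * u ^ 2 - k * (2 * u ^ 1)) / (u ^ 2) ^ 2)) = 2 * k ^ 2 / u ^ 3 := by
    field_simp
    ring
  have e2 : ((0 * u - k * 1) / u ^ 2) * (1 - k / u) + (k / u) * (-((0 * u - k * 1) / u ^ 2))
      = 2 * k ^ 2 / u ^ 3 - k / u ^ 2 := by
    field_simp
    ring
  rw [e1, e2, one_div_mul_eq_div, one_div_mul_eq_div] at H
  exact H

lemma relay_deriv_nonneg_iff (k u : ℝ) (hk0 : 0 < k) (hk1 : k < 1)
    (hu : Real.sqrt k < u) :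
    0 ≤ deriv (relayObjective k) u ↔ (u - 2 * k) ^ 2 ≤ k ∨ u ≤ 2 * k := by
  have hsk : 0 < Real.sqrt k := Real.sqrt_pos.2 hk0
  have hu0 : 0 < u := hsk.trans hu
  have hu2 : k < u ^ 2 := (Real.sqrt_lt' hu0).1 hu
  have hs2 : Real.sqrt k ^ 2 = k := Real.sq_sqrt hk0.le
  have hs1 : Real.sqrt k < 1 := by
    nlinarith [Real.sqrt_nonneg k]
  have huk : k < u := by nlinarith
  have ha : 0 < k * (1 - k / u ^ 2) := by
    have h1 : k / u ^ 2 < 1 := (div_lt_one (by positivity)).2 hu2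
    nlinarith
  have hb : 0 < (k / u) * (1 - k / u) := by
    have h1 : 0 < k / u := by positivity
    have h2 : k / u < 1 := (div_lt_one hu0).2 huk
    nlinarith
  rw [(relay_hasDerivAt k u hk0 hu0 hu2 huk).deriv]
  set A := Real.sqrt (k * (1 - k / u ^ 2)) with hAdef
  set B := Real.sqrt ((k / u) * (1 - k / u)) with hBdef
  have hA : 0 < A := Real.sqrt_pos.2 ha
  have hB : 0 < B := Real.sqrt_pos.2 hb
  have hA2 : A ^ 2 = k * (1 - k / u ^ 2) := Real.sq_sqrt ha.le
  have hB2 : B ^ 2 = (k / u) * (1 - k / u) := Real.sq_sqrt hb.le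
  have hstep : (2 * k ^ 2 / u ^ 3) / (2 * A) + (2 * k ^ 2 / u ^ 3 - k / u ^ 2) / (2 * B)
      = ((2 * k ^ 2 / u ^ 3) * B + (2 * k ^ 2 / u ^ 3 - k / u ^ 2) * A) / (2 * A * B) := by
    field_simp
  rw [hstep, le_div_iff₀ (by positivity : (0:ℝ) < 2 * A * B), zero_mul]
  by_cases hc : u ≤ 2 * k
  · have hb' : 0 ≤ 2 * k ^ 2 / u ^ 3 - k / u ^ 2 := by
      have h : 2 * k ^ 2 / u ^ 3 - k / u ^ 2 = k * (2 * k - u) / u ^ 3 := by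
        field_simp
      rw [h]
      exact div_nonneg (mul_nonneg hk0.le (by linarith)) (by positivity)
    constructor
    · intro _; exact Or.inr hc
    · intro _
      have := add_nonneg (mul_nonneg (by positivity : (0:ℝ) ≤ 2 * k ^ 2 / u ^ 3) hB.le)
        (mul_nonneg hb' hA.le)
      linarith
  · push_neg at hc
    rw [or_iff_left (not_le.2 hc)]
    set c := k * (u - 2 * k) / u ^ 3 with hcdef
    have hcpos : 0 < c := div_pos (mul_pos hk0 (by linarith)) (by positivity)
    have hrew : (2 * k ^ 2 / u ^ 3) * B + (2 * k ^ 2 / u ^ 3 - k / u ^ 2) * A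
        = (2 * k ^ 2 / u ^ 3) * B - c * A := by
      rw [hcdef]; field_simp; ring
    rw [hrew, sub_nonneg]
    have hsq : c * A ≤ (2 * k ^ 2 / u ^ 3) * B ↔
        (c * A) ^ 2 ≤ ((2 * k ^ 2 / u ^ 3) * B) ^ 2 := by
      constructor
      · intro h; exact pow_le_pow_left₀ (by positivity) h 2
      · intro h; exact le_of_pow_le_pow_left₀ two_ne_zero (by positivity) h
    rw [hsq]
    have hexp : ((2 * k ^ 2 / u ^ 3) * B) ^ 2 - (c * A) ^ 2
        = k ^ 3 / u ^ 6 * (k - (u - 2 * k) ^ 2) := by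
      rw [mul_pow, mul_pow, hA2, hB2, hcdef]
      field_simp
      ring
    have hq : 0 < k ^ 3 / u ^ 6 := by positivity
    constructor
    · intro h
      have h0 : 0 ≤ k ^ 3 / u ^ 6 * (k - (u - 2 * k) ^ 2) := by linarith
      by_contra hcon
      push_neg at hcon
      nlinarith [mul_pos hq (by linarith : (0:ℝ) < (u - 2 * k) ^ 2 - k)]
    · intro h
      have h0 : 0 ≤ k ^ 3 / u ^ 6 * (k - (u - 2 * k) ^ 2) :=
        mul_nonneg hq.le (by linarith)
      linarith

theorem stmt_0 (k : ℝ) (hk : k ∈ Set.Ioo (0 : ℝ) 1) :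
    (∀ u ∈ Set.Ioc (Real.sqrt k) 1,
      (0 ≤ deriv (relayObjective k) u ↔
        u ^ 2 / (4 * k ^ 2) - u / k + (1 - 1 / (4 * k)) ≤ 0 ∨ u ≤ 2 * k)) ∧
    MonotoneOn (relayObjective k)
      (Set.Icc (2 * k - Real.sqrt k) (2 * k + Real.sqrt k) ∩ Set.Ioc (Real.sqrt k) 1) := by
  obtain ⟨hk0, hk1⟩ := hk
  have hsk : 0 < Real.sqrt k := Real.sqrt_pos.2 hk0
  have hs2 : Real.sqrt k ^ 2 = k := Real.sq_sqrt hk0.le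
  have hquad : ∀ u : ℝ, (u ^ 2 / (4 * k ^ 2) - u / k + (1 - 1 / (4 * k)) ≤ 0
      ↔ (u - 2 * k) ^ 2 ≤ k) := by
    intro u
    have h4 : (0:ℝ) < 4 * k ^ 2 := by positivity
    have he : u ^ 2 / (4 * k ^ 2) - u / k + (1 - 1 / (4 * k))
        = ((u - 2 * k) ^ 2 - k) / (4 * k ^ 2) := by
      field_simp
      ring
    rw [he]
    constructor
    · intro h
      nlinarith [div_mul_cancel₀ ((u - 2 * k) ^ 2 - k) h4.ne',
        mul_nonpos_of_nonpos_of_nonneg h h4.le]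
    · intro h
      exact div_nonpos_of_nonpos_of_nonneg (by linarith) h4.le
  constructor
  · intro u hu
    rw [hquad u]
    exact relay_deriv_nonneg_iff k u hk0 hk1 hu.1
  · have hconv : Convex ℝ (Set.Icc (2 * k - Real.sqrt k) (2 * k + Real.sqrt k)
        ∩ Set.Ioc (Real.sqrt k) 1) := (convex_Icc _ _).inter (convex_Ioc _ _)
    have hdiff : ∀ x ∈ Set.Icc (2 * k - Real.sqrt k) (2 * k + Real.sqrt k)
        ∩ Set.Ioc (Real.sqrt k) 1, DifferentiableAt ℝ (relayObjective k) x := by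
      intro x hx
      obtain ⟨hx1, hx2⟩ := hx
      have hx0 : 0 < x := hsk.trans hx2.1
      have hxk2 : k < x ^ 2 := (Real.sqrt_lt' hx0).1 hx2.1
      have hs1 : Real.sqrt k < 1 := by nlinarith [Real.sqrt_nonneg k]
      have hxk : k < x := by nlinarith [hx2.1]
      exact (relay_hasDerivAt k x hk0 hx0 hxk2 hxk).differentiableAt
    apply monotoneOn_of_deriv_nonneg hconv
    · exact fun x hx => (hdiff x hx).continuousAt.continuousWithinAt
    · exact fun x hx => (hdiff x (interior_subset hx)).differentiableWithinAt
    · intro x hx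
      have hx' := interior_subset hx
      obtain ⟨hx1, hx2⟩ := hx'
      rw [relay_deriv_nonneg_iff k x hk0 hk1 hx2.1]
      left
      have h1 : -(Real.sqrt k) ≤ x - 2 * k := by linarith [hx1.1]
      have h2 : x - 2 * k ≤ Real.sqrt k := by linarith [hx1.2]
      nlinarith
end

section
/- Let eta > 1 and let x_th in (0, 1/2) satisfy x_th^{-eta} = 1 + (1 - x_th)^{-eta} (normalized by L = 1). Then f1(x_th) = (x_th^{1-eta} - 1)^2 / x_th^{-eta} < (x_th^{-eta} - 1)^2 / x_th^{-eta} = f2(x_th), where f1, f2 are as in the power-law placement problem. Consequently the unique root p of f1 = f2 in (0,1/2) satisfies p < x_th. -/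
open Real

/-!
Write `A = x^{-η}`, `B = (1-x)^{-η}` and `C = x^{1-η} = x A`. Since `(1/x - 1)^{-η} = B / A`,
`f1 = (C-1)² (A-B) / A` and `f2 = B (A-1) / A`. If the gap `A - B` is at most `1`, then
`B ≥ A - 1 > 0` and `1 ≤ C < A`, so `(C-1)² (A-B) ≤ (C-1)² < (A-1)² ≤ B (A-1)`, i.e. `f1 < f2`.
The gap is decreasing in `x` and equals `1` at `x_th`, so `f1 < f2` on all of `[x_th, 1)`.
-/

/-- `f1(x) = (x^{1-η} - 1)² (1 - (1/x - 1)^{-η})`. -/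
noncomputable def f1 (η x : ℝ) : ℝ :=
  (x ^ (1 - η) - 1) ^ 2 * (1 - (1 / x - 1) ^ (-η))

/-- `f2(x) = (1-x)^{-η} - (1/x - 1)^{-η}`. -/
noncomputable def f2 (η x : ℝ) : ℝ :=
  (1 - x) ^ (-η) - (1 / x - 1) ^ (-η)

lemma one_div_sub_one_rpow {x : ℝ} (y : ℝ) (hx0 : 0 < x) (hx1 : x ≤ 1) :
    (1 / x - 1) ^ y = (1 - x) ^ y / x ^ y := by
  rw [show 1 / x - 1 = (1 - x) / x by field_simp, div_rpow (by linarith) hx0.le]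

lemma f1_eq (η : ℝ) {x : ℝ} (hx0 : 0 < x) (hx1 : x ≤ 1) :
    f1 η x = (x ^ (1 - η) - 1) ^ 2 * (x ^ (-η) - (1 - x) ^ (-η)) / x ^ (-η) := by
  have hA : x ^ (-η) ≠ 0 := (rpow_pos_of_pos hx0 _).ne'
  rw [f1, one_div_sub_one_rpow _ hx0 hx1]
  field_simp

lemma f2_eq (η : ℝ) {x : ℝ} (hx0 : 0 < x) (hx1 : x ≤ 1) :
    f2 η x = (1 - x) ^ (-η) * (x ^ (-η) - 1) / x ^ (-η) := by
  have hA : x ^ (-η) ≠ 0 := (rpow_pos_of_pos hx0 _).ne'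
  rw [f2, one_div_sub_one_rpow _ hx0 hx1]
  field_simp

lemma antitoneOn_rpow_neg_sub_rpow_neg_one_sub {η : ℝ} (hη : 0 ≤ η) :
    AntitoneOn (fun x : ℝ => x ^ (-η) - (1 - x) ^ (-η)) (Set.Ioo 0 1) := by
  intro x hx p hp hxp
  have hA : p ^ (-η) ≤ x ^ (-η) := rpow_le_rpow_of_nonpos hx.1 hxp (by linarith)
  have hB : (1 - x) ^ (-η) ≤ (1 - p) ^ (-η) :=
    rpow_le_rpow_of_nonpos (by linarith [hp.2]) (by linarith) (by linarith)
  dsimp only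
  linarith

lemma f1_lt_f2_of_rpow_neg_sub_le_one {η x : ℝ} (hη : 1 ≤ η) (hx0 : 0 < x) (hx1 : x < 1)
    (hgap : x ^ (-η) - (1 - x) ^ (-η) ≤ 1) : f1 η x < f2 η x := by
  have hCxA : x ^ (1 - η) = x * x ^ (-η) := by
    rw [show 1 - η = 1 + -η by ring, rpow_add hx0, rpow_one]
  rw [f1_eq η hx0 hx1.le, f2_eq η hx0 hx1.le]
  set A := x ^ (-η)
  set B := (1 - x) ^ (-η)
  set C := x ^ (1 - η)
  have hA0 : 0 < A := rpow_pos_of_pos hx0 _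
  have hA1 : 1 < A := one_lt_rpow_of_pos_of_lt_one_of_neg hx0 hx1 (by linarith)
  have hC1 : 1 ≤ C := one_le_rpow_of_pos_of_le_one_of_nonpos hx0 hx1.le (by linarith)
  have hCA : C < A := by
    rw [hCxA]
    nlinarith
  apply div_lt_div_of_pos_right _ hA0
  calc (C - 1) ^ 2 * (A - B) ≤ (C - 1) ^ 2 := by nlinarith [sq_nonneg (C - 1)]
    _ < (A - 1) ^ 2 := by nlinarith
    _ ≤ B * (A - 1) := by nlinarith

theorem stmt_5 (η x_th : ℝ) (hη : 1 < η) (hx : x_th ∈ Set.Ioo (0 : ℝ) (1 / 2))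
    (hth : x_th ^ (-η) = 1 + (1 - x_th) ^ (-η)) :
    f1 η x_th = (x_th ^ (1 - η) - 1) ^ 2 / x_th ^ (-η) ∧
    f2 η x_th = (x_th ^ (-η) - 1) ^ 2 / x_th ^ (-η) ∧
    f1 η x_th < f2 η x_th ∧
    ∀ p ∈ Set.Ioo (0 : ℝ) (1 / 2), f1 η p = f2 η p → p < x_th := by
  obtain ⟨hx0, hx2⟩ := hx
  have hx1 : x_th < 1 := by linarith
  refine ⟨by rw [f1_eq η hx0 hx1.le, hth]; ring, by rw [f2_eq η hx0 hx1.le, hth]; ring,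
    f1_lt_f2_of_rpow_neg_sub_le_one hη.le hx0 hx1 (by linarith), ?_⟩
  rintro p ⟨hp0, hp2⟩ hfp
  by_contra! hle
  have hgap := antitoneOn_rpow_neg_sub_rpow_neg_one_sub (by linarith : 0 ≤ η)
    ⟨hx0, hx1⟩ ⟨hp0, by linarith⟩ hle
  exact (f1_lt_f2_of_rpow_neg_sub_le_one hη.le hp0 (by linarith) (by linarith)).ne hfp
end

section
/- Consider the linear program: maximize zeta subject to zeta <= b_k * sum_{j=1}^{k} a_j gamma_j for k = 1,...,N+1, sum_{j=1}^{N+1} gamma_j <= P_T, and gamma_j >= 0, where b_1 >= b_2 >= ... >= b_{N+1} > 0 and 0 < a_1 <= a_2 <= ... <= a_{N+1}. Then the optimal value is zeta* = P_T / (sum_{k=1}^{N+1} (1/a_k)(1/b_k - 1/b_{k-1})) with the convention 1/b_0 = 0, achieved by gamma_j* = (zeta*/a_j)(1/b_j - 1/b_{j-1}), and at the optimum all constraints zeta <= b_k sum_{j<=k} a_j gamma_j hold with equality. -/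
/-! Write `u k = 1 / b k` (with `u 0 = 0`) and `T k = ∑_{j ≤ k} a j γ j`, so that
`∑ γ j = ∑ (T k - T (k-1)) / a k` and `∑ (1 / a k) (1 / b k - 1 / b (k-1)) = ∑ (u k - u (k-1)) / a k`.
Since `1 / a` is nonincreasing, Abel summation shows that `v ↦ ∑ (v k - v (k-1)) / a k` is monotone
in `v`. The constraints say `ζ u ≤ T` pointwise, hence `ζ ∑ (1 / a k) (1 / b k - 1 / b (k-1)) ≤ ∑ γ j ≤ P_T`.
The proposed `γ*` makes `T = ζ* u`, so every constraint is tight and the bound is attained. -/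

open Finset

theorem sum_Icc_sub_pred {M : Type*} [AddCommGroup M] (u : ℕ → M) (n : ℕ) :
    ∑ j ∈ Icc 1 n, (u j - u (j - 1)) = u n - u 0 := by
  induction n with
  | zero => simp
  | succ m ih => rw [sum_Icc_succ_top (by omega), ih, Nat.add_sub_cancel]; abel

theorem sum_Icc_sub_pred_sum_Icc {M : Type*} [AddCommGroup M] (f : ℕ → M) {k : ℕ} (hk : 1 ≤ k) :
    ∑ j ∈ Icc 1 k, f j - ∑ j ∈ Icc 1 (k - 1), f j = f k := by
  obtain ⟨m, rfl⟩ := Nat.exists_eq_add_of_le' hk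
  rw [sum_Icc_succ_top (by omega), Nat.add_sub_cancel, add_sub_cancel_left]

section AbelSummation

variable {𝕜 : Type*} [Field 𝕜] [LinearOrder 𝕜] [IsStrictOrderedRing 𝕜]

/-- By Abel summation the right side is `δ n / a n + ∑_{1 ≤ j < n} δ j (1 / a j - 1 / a (j+1))`,
whose terms are all nonnegative. -/
theorem div_le_sum_Icc_sub_pred_div (a δ : ℕ → 𝕜) (n : ℕ) (hδ₀ : δ 0 = 0)
    (hδ : ∀ k ∈ Icc 1 n, 0 ≤ δ k) (ha_pos : ∀ k ∈ Icc 1 n, 0 < a k)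
    (ha_mono : ∀ k ∈ Ico 1 n, a k ≤ a (k + 1)) :
    δ n / a n ≤ ∑ j ∈ Icc 1 n, (δ j - δ (j - 1)) / a j := by
  induction n with
  | zero => simp [hδ₀]
  | succ m ih =>
    have ih := ih (fun k hk => hδ k (Icc_subset_Icc_right m.le_succ hk))
      (fun k hk => ha_pos k (Icc_subset_Icc_right m.le_succ hk))
      (fun k hk => ha_mono k (Ico_subset_Ico_right m.le_succ hk))
    have hshift : δ m / a (m + 1) ≤ δ m / a m := by
      rcases Nat.eq_zero_or_pos m with rfl | hm
      · simp [hδ₀]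
      · exact div_le_div_of_nonneg_left (hδ m (by simp; omega)) (ha_pos m (by simp; omega))
          (ha_mono m (by simp; omega))
    rw [sum_Icc_succ_top (by omega), Nat.add_sub_cancel, sub_div]
    linarith

theorem sum_Icc_sub_pred_div_le_of_le (a u v : ℕ → 𝕜) (n : ℕ) (h₀ : u 0 = v 0)
    (huv : ∀ k ∈ Icc 1 n, u k ≤ v k) (ha_pos : ∀ k ∈ Icc 1 n, 0 < a k)
    (ha_mono : ∀ k ∈ Ico 1 n, a k ≤ a (k + 1)) :
    ∑ j ∈ Icc 1 n, (u j - u (j - 1)) / a j ≤ ∑ j ∈ Icc 1 n, (v j - v (j - 1)) / a j := by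
  have hδ := div_le_sum_Icc_sub_pred_div a (v - u) n (by simp [h₀])
    (fun k hk => sub_nonneg.mpr (huv k hk)) ha_pos ha_mono
  have hn : 0 ≤ (v - u) n / a n := by
    rcases Nat.eq_zero_or_pos n with rfl | hn
    · simp [h₀]
    · exact div_nonneg (sub_nonneg.mpr (huv n (by simp; omega))) (ha_pos n (by simp; omega)).le
  have hsplit : ∑ j ∈ Icc 1 n, ((v - u) j - (v - u) (j - 1)) / a j
      = ∑ j ∈ Icc 1 n, (v j - v (j - 1)) / a j - ∑ j ∈ Icc 1 n, (u j - u (j - 1)) / a j := by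
    rw [← sum_sub_distrib]; congr 1 with j; simp only [Pi.sub_apply]; ring
  linarith

end AbelSummation

noncomputable def recipWithZero (b : ℕ → ℝ) (k : ℕ) : ℝ := if k = 0 then 0 else 1 / b k

@[simp]
theorem recipWithZero_zero (b : ℕ → ℝ) : recipWithZero b 0 = 0 := if_pos rfl

theorem recipWithZero_of_ne_zero (b : ℕ → ℝ) {k : ℕ} (hk : k ≠ 0) :
    recipWithZero b k = 1 / b k := if_neg hk

theorem recipWithZero_sub_pred (b : ℕ → ℝ) {k : ℕ} (hk : 1 ≤ k) :
    recipWithZero b k - recipWithZero b (k - 1)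
      = if k = 1 then 1 / b 1 else 1 / b k - 1 / b (k - 1) := by
  rcases hk.eq_or_lt with rfl | hk
  · simp [recipWithZero]
  · simp [recipWithZero, hk.ne', show k ≠ 0 by omega, show k - 1 ≠ 0 by omega]

theorem recipWithZero_pred_le {n : ℕ} {b : ℕ → ℝ} (hb_pos : ∀ k ∈ Icc 1 n, 0 < b k)
    (hb_anti : ∀ k ∈ Ico 1 n, b (k + 1) ≤ b k) :
    ∀ k ∈ Icc 1 n, recipWithZero b (k - 1) ≤ recipWithZero b k := by
  intro k hk
  rw [mem_Icc] at hk
  obtain ⟨m, rfl⟩ := Nat.exists_eq_add_of_le' hk.1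
  rcases Nat.eq_zero_or_pos m with rfl | hm
  · simpa [recipWithZero] using (hb_pos 1 (by simp; omega)).le
  · simp only [recipWithZero, Nat.add_sub_cancel, hm.ne', if_false, Nat.add_one_ne_zero]
    exact one_div_le_one_div_of_le (hb_pos (m + 1) (by simp; omega))
      (hb_anti m (by simp; omega))

theorem recipWithZero_pos {b : ℕ → ℝ} {k : ℕ} (hk : 1 ≤ k) (hb : 0 < b k) :
    0 < recipWithZero b k := by
  simpa [recipWithZero, show k ≠ 0 by omega] using hb

theorem mul_sum_recipWithZero_sub_pred_div_le {n : ℕ} {a b γ : ℕ → ℝ} {ζ : ℝ}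
    (ha_pos : ∀ k ∈ Icc 1 n, 0 < a k) (ha_mono : ∀ k ∈ Ico 1 n, a k ≤ a (k + 1))
    (hb_pos : ∀ k ∈ Icc 1 n, 0 < b k)
    (hcons : ∀ k ∈ Icc 1 n, ζ ≤ b k * ∑ j ∈ Icc 1 k, a j * γ j) :
    ζ * ∑ k ∈ Icc 1 n, (recipWithZero b k - recipWithZero b (k - 1)) / a k
      ≤ ∑ j ∈ Icc 1 n, γ j := by
  set T : ℕ → ℝ := fun k => ∑ j ∈ Icc 1 k, a j * γ j
  have hζT : ∀ k ∈ Icc 1 n, ζ * recipWithZero b k ≤ T k := by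
    intro k hk
    rw [recipWithZero_of_ne_zero b (by simp at hk; omega), mul_one_div]
    exact (div_le_iff₀' (hb_pos k hk)).mpr (hcons k hk)
  calc ζ * ∑ k ∈ Icc 1 n, (recipWithZero b k - recipWithZero b (k - 1)) / a k
      = ∑ k ∈ Icc 1 n, (ζ * recipWithZero b k - ζ * recipWithZero b (k - 1)) / a k := by
        rw [mul_sum]; congr 1 with k; ring
    _ ≤ ∑ k ∈ Icc 1 n, (T k - T (k - 1)) / a k :=
        sum_Icc_sub_pred_div_le_of_le a _ T n (by simp [T]) hζT ha_pos ha_mono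
    _ = ∑ j ∈ Icc 1 n, γ j := by
        refine sum_congr rfl fun k hk => ?_
        rw [sum_Icc_sub_pred_sum_Icc _ (mem_Icc.mp hk).1, mul_div_cancel_left₀ _ (ha_pos k hk).ne']

theorem stmt_6 (N : ℕ) (P_T : ℝ) (hP : 0 < P_T) (a b : ℕ → ℝ)
    (ha_pos : ∀ k ∈ Finset.Icc 1 (N + 1), 0 < a k)
    (hb_pos : ∀ k ∈ Finset.Icc 1 (N + 1), 0 < b k)
    (ha_mono : ∀ k ∈ Finset.Icc 1 N, a k ≤ a (k + 1))
    (hb_anti : ∀ k ∈ Finset.Icc 1 N, b (k + 1) ≤ b k) :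
    -- `d k` is `1/b_k - 1/b_{k-1}` with the convention `1/b_0 = 0`
    let d : ℕ → ℝ := fun k => if k = 1 then 1 / b 1 else 1 / b k - 1 / b (k - 1)
    let ζ : ℝ := P_T / ∑ k ∈ Finset.Icc 1 (N + 1), d k / a k
    let γ : ℕ → ℝ := fun j => (ζ / a j) * d j
    -- feasibility of the claimed optimum
    (∀ j ∈ Finset.Icc 1 (N + 1), 0 ≤ γ j) ∧
    (∑ j ∈ Finset.Icc 1 (N + 1), γ j = P_T) ∧
    -- all the rate constraints hold with equality at the optimum
    (∀ k ∈ Finset.Icc 1 (N + 1), ζ = b k * ∑ j ∈ Finset.Icc 1 k, a j * γ j) ∧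
    -- optimality: any feasible point has value at most ζ
    (∀ (γ' : ℕ → ℝ) (ζ' : ℝ),
      (∀ j ∈ Finset.Icc 1 (N + 1), 0 ≤ γ' j) →
      (∑ j ∈ Finset.Icc 1 (N + 1), γ' j ≤ P_T) →
      (∀ k ∈ Finset.Icc 1 (N + 1), ζ' ≤ b k * ∑ j ∈ Finset.Icc 1 k, a j * γ' j) →
      ζ' ≤ ζ) := by
  intro d ζ γ
  rw [← Ico_add_one_right_eq_Icc] at ha_mono hb_anti
  have hd : ∀ k ∈ Icc 1 (N + 1), d k = recipWithZero b k - recipWithZero b (k - 1) :=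
    fun k hk => (recipWithZero_sub_pred b (mem_Icc.mp hk).1).symm
  have hd_nonneg : ∀ k ∈ Icc 1 (N + 1), 0 ≤ d k := fun k hk => by
    rw [hd k hk, sub_nonneg]; exact recipWithZero_pred_le hb_pos hb_anti k hk
  have hS : ∑ k ∈ Icc 1 (N + 1), d k / a k
      = ∑ k ∈ Icc 1 (N + 1), (recipWithZero b k - recipWithZero b (k - 1)) / a k :=
    sum_congr rfl fun k hk => by rw [hd k hk]
  have hS_pos : 0 < ∑ k ∈ Icc 1 (N + 1), d k / a k := by
    have hN : N + 1 ∈ Icc 1 (N + 1) := by simp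
    refine (div_pos (recipWithZero_pos (by omega) (hb_pos _ hN)) (ha_pos _ hN)).trans_le ?_
    rw [hS]
    exact div_le_sum_Icc_sub_pred_div a (recipWithZero b) _ (recipWithZero_zero b)
      (fun k hk => (recipWithZero_pos (mem_Icc.mp hk).1 (hb_pos k hk)).le) ha_pos ha_mono
  have hγ : ∀ j ∈ Icc 1 (N + 1), a j * γ j = ζ * d j := fun j hj => by
    simp only [γ]; field_simp [(ha_pos j hj).ne']
  refine ⟨fun j hj => ?_, ?_, fun k hk => ?_, fun γ' ζ' _ hsum hcons => ?_⟩
  · exact mul_nonneg (div_pos (div_pos hP hS_pos) (ha_pos j hj)).le (hd_nonneg j hj)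
  · calc ∑ j ∈ Icc 1 (N + 1), γ j = ζ * ∑ k ∈ Icc 1 (N + 1), d k / a k := by
          rw [mul_sum]; exact sum_congr rfl fun j _ => by simp only [γ]; ring
      _ = P_T := div_mul_cancel₀ _ hS_pos.ne'
  · have hk' := Icc_subset_Icc_right (mem_Icc.mp hk).2 (a := 1)
    rw [sum_congr rfl fun j hj => hγ j (hk' hj), ← mul_sum,
      sum_congr rfl fun j hj => hd j (hk' hj), sum_Icc_sub_pred, recipWithZero_zero, sub_zero,
      recipWithZero_of_ne_zero b (by simp at hk; omega)]
    field_simp [(hb_pos k hk).ne']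
  · rw [le_div_iff₀ hS_pos, hS]
    exact (mul_sum_recipWithZero_sub_pred_div_le ha_pos ha_mono hb_pos hcons).trans hsum
end

section
/- Let lambda > 0, N >= 1, and define F_N(z_1,...,z_N) = z_1 + sum_{k=2}^{N+1} (z_k - z_{k-1}) / (1 + z_1 + ... + z_{k-1}) subject to 1 <= z_1 <= ... <= z_N <= z_{N+1} = e^{lambda}, with z_0 = 1. Then the minimum of F_{N+1} over (N+1)-tuples is strictly smaller than the minimum of F_N over N-tuples; i.e., adding an extra relay strictly decreases the optimal net attenuation. -/
/-!
Repeating the base point, `z' = (1, 1, z₁, …, z_{N+1})`, is feasible for `N + 1` relays and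
shifts every partial sum `z₀ + ⋯ + z_{k-1}` up by one, so each increment `z_k - z_{k-1}` is
divided by `S_k + 1` instead of `S_k`. Since `1 ≤ S_k ≤ (N + 1) e^λ =: M`, this saves at least
`(z_k - z_{k-1}) / (M (M + 1))` per term, and the increments telescope to `e^λ - 1 > 0`. The saving
is uniform over feasible tuples, hence survives passing to the infima.
-/

/-- The set of values of the net-attenuation objective
`F_N(z) = z₁ + ∑_{k=2}^{N+1} (z_k - z_{k-1})/(z₀ + z₁ + ⋯ + z_{k-1})`
over feasible tuples `1 = z₀ ≤ z₁ ≤ ⋯ ≤ z_N ≤ z_{N+1} = e^λ`. -/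
def attenuationValues (N : ℕ) (lam : ℝ) : Set ℝ :=
  {v | ∃ z : ℕ → ℝ, z 0 = 1 ∧ z (N + 1) = Real.exp lam ∧
    (∀ k ≤ N, z k ≤ z (k + 1)) ∧
    v = z 1 + ∑ k ∈ Finset.Icc 2 (N + 1),
      (z k - z (k - 1)) / ∑ l ∈ Finset.range k, z l}

open Finset

noncomputable def attenuation (N : ℕ) (z : ℕ → ℝ) : ℝ :=
  z 1 + ∑ k ∈ Icc 2 (N + 1), (z k - z (k - 1)) / ∑ l ∈ range k, z l

theorem csInf_lt_csInf_of_forall_exists_add_le {s t : Set ℝ} {ε : ℝ} (hs : s.Nonempty)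
    (ht : BddBelow t) (hε : 0 < ε) (h : ∀ v ∈ s, ∃ v' ∈ t, v' + ε ≤ v) : sInf t < sInf s := by
  have : sInf t + ε ≤ sInf s := le_csInf hs fun v hv ↦ by
    obtain ⟨v', hv', hle⟩ := h v hv
    linarith [csInf_le ht hv']
  linarith

theorem div_mul_add_one_le_div_sub_div_add_one {g S M : ℝ} (hg : 0 ≤ g) (hS : 0 < S)
    (hSM : S ≤ M) : g / (M * (M + 1)) ≤ g / S - g / (S + 1) := by
  have : g / S - g / (S + 1) = g / (S * (S + 1)) := by field_simp; ring
  rw [this]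
  gcongr
  linarith

section Attenuation

variable {N : ℕ} {z : ℕ → ℝ}

theorem attenuation_eq_one_add (hz0 : z 0 = 1) :
    attenuation N z = 1 + ∑ k ∈ range (N + 1), (z (k + 1) - z k) / ∑ l ∈ range (k + 1), z l := by
  have hIcc : Icc 2 (N + 1) = Ico 2 (N + 2) := by ext; simp only [mem_Icc, mem_Ico]; omega
  have hshift : ∀ k, 2 + k = k + 1 + 1 := fun k ↦ by omega
  rw [attenuation, hIcc, sum_Ico_eq_sum_range, sum_range_succ', Nat.add_sub_cancel_right]
  simp only [hshift, zero_add, sum_range_one, hz0, div_one, Nat.add_sub_cancel]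
  ring

theorem attenuation_succ_comp_pred (hz0 : z 0 = 1) :
    attenuation (N + 1) (fun j ↦ z (j - 1)) =
      1 + ∑ k ∈ range (N + 1), (z (k + 1) - z k) / (∑ l ∈ range (k + 1), z l + 1) := by
  rw [attenuation_eq_one_add (z := fun j ↦ z (j - 1)) hz0, sum_range_succ']
  simp only [Nat.add_sub_cancel, sub_self, zero_div, add_zero]
  refine congrArg (1 + ·) (sum_congr rfl fun k _ ↦ ?_)
  rw [sum_range_succ' _ (k + 1)]
  simp only [Nat.add_sub_cancel, Nat.zero_sub, hz0]

theorem monotoneOn_Iic_of_le_succ (hz : ∀ k ≤ N, z k ≤ z (k + 1)) :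
    MonotoneOn z (Set.Iic (N + 1)) :=
  monotoneOn_of_le_add_one Set.ordConnected_Iic fun k _ _ hk ↦ hz k (by simpa using hk)

theorem one_le_sum_range_succ (hz0 : z 0 = 1) (hz : ∀ k ≤ N, z k ≤ z (k + 1)) {k : ℕ}
    (hk : k ≤ N) : 1 ≤ ∑ l ∈ range (k + 1), z l := by
  have hmono := monotoneOn_Iic_of_le_succ hz
  refine hz0 ▸ single_le_sum (fun l hl ↦ ?_) (mem_range.2 k.succ_pos)
  have hl : l ≤ N + 1 := by simp only [mem_range] at hl; omega
  linarith [hmono (Set.mem_Iic.2 (Nat.zero_le _)) (Set.mem_Iic.2 hl) (Nat.zero_le l)]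

theorem sum_range_succ_le (hz0 : z 0 = 1) (hz : ∀ k ≤ N, z k ≤ z (k + 1)) {k : ℕ}
    (hk : k ≤ N) : ∑ l ∈ range (k + 1), z l ≤ (N + 1) * z (N + 1) := by
  have hmono := monotoneOn_Iic_of_le_succ hz
  have hzN : 0 ≤ z (N + 1) := by
    linarith [hmono (Set.mem_Iic.2 (Nat.zero_le _)) (Set.mem_Iic.2 le_rfl) (Nat.zero_le _)]
  calc ∑ l ∈ range (k + 1), z l ≤ (k + 1) * z (N + 1) := by
        simpa using sum_le_card_nsmul (range (k + 1)) z _ fun l hl ↦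
          hmono (Set.mem_Iic.2 (by simp only [mem_range] at hl; omega)) (Set.mem_Iic.2 le_rfl)
            (by simp only [mem_range] at hl; omega)
    _ ≤ (N + 1) * z (N + 1) := by gcongr

theorem one_le_attenuation (hz0 : z 0 = 1) (hz : ∀ k ≤ N, z k ≤ z (k + 1)) :
    1 ≤ attenuation N z := by
  rw [attenuation_eq_one_add hz0, le_add_iff_nonneg_right]
  refine sum_nonneg fun k hk ↦ div_nonneg ?_ ?_
  · linarith [hz k (by simp only [mem_range] at hk; omega)]
  · linarith [one_le_sum_range_succ hz0 hz (k := k) (by simp only [mem_range] at hk; omega)]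

theorem attenuation_succ_comp_pred_add_le (hz0 : z 0 = 1) (hz : ∀ k ≤ N, z k ≤ z (k + 1)) :
    attenuation (N + 1) (fun j ↦ z (j - 1)) +
        (z (N + 1) - 1) / ((N + 1) * z (N + 1) * ((N + 1) * z (N + 1) + 1)) ≤
      attenuation N z := by
  have htelescope : z (N + 1) - 1 = ∑ k ∈ range (N + 1), (z (k + 1) - z k) := by
    rw [sum_range_sub, hz0]
  rw [attenuation_succ_comp_pred hz0, attenuation_eq_one_add hz0, htelescope, sum_div, add_assoc,
    ← sum_add_distrib]
  gcongr with k hk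
  have hk : k ≤ N := by simp only [mem_range] at hk; omega
  have hS := one_le_sum_range_succ hz0 hz hk
  linarith [div_mul_add_one_le_div_sub_div_add_one (sub_nonneg.2 (hz k hk)) (by linarith)
    (sum_range_succ_le hz0 hz hk)]

end Attenuation

theorem attenuationValues_nonempty (N : ℕ) {lam : ℝ} (hlam : 0 ≤ lam) :
    (attenuationValues N lam).Nonempty := by
  refine ⟨_, fun k ↦ if k = 0 then 1 else Real.exp lam, by simp, by simp, fun k _ ↦ ?_, rfl⟩
  rcases k with _ | k <;> simp [Real.one_le_exp hlam]

theorem attenuationValues_bddBelow (N : ℕ) (lam : ℝ) : BddBelow (attenuationValues N lam) :=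
  ⟨1, by rintro _ ⟨z, hz0, -, hz, rfl⟩; exact one_le_attenuation hz0 hz⟩

theorem stmt_8_general (N : ℕ) (lam : ℝ) (hlam : 0 < lam) :
    sInf (attenuationValues (N + 1) lam) < sInf (attenuationValues N lam) := by
  refine csInf_lt_csInf_of_forall_exists_add_le (attenuationValues_nonempty N hlam.le)
    (attenuationValues_bddBelow (N + 1) lam) (ε := (Real.exp lam - 1) /
      ((N + 1) * Real.exp lam * ((N + 1) * Real.exp lam + 1))) (div_pos (by simpa) (by positivity)) ?_
  rintro _ ⟨z, hz0, hzE, hz, rfl⟩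
  -- `fun j ↦ z (j - 1)` is `(1, 1, z₁, …)`: truncated subtraction repeats `z₀ = 1`
  refine ⟨_, ⟨fun j ↦ z (j - 1), hz0, hzE, fun k hk ↦ ?_, rfl⟩,
    hzE ▸ attenuation_succ_comp_pred_add_le hz0 hz⟩
  rcases k with _ | k
  · exact le_rfl
  · exact hz k (by omega)

theorem stmt_8 (N : ℕ) (hN : 1 ≤ N) (lam : ℝ) (hlam : 0 < lam) :
    sInf (attenuationValues (N + 1) lam) < sInf (attenuationValues N lam) :=
  stmt_8_general N lam hlam
end

section
/- Let lambda1 < lambda2 be positive reals and N >= 1. Define G(N, lambda) = e^{lambda} / (min over feasible z of F_N(z; lambda)), where F_N(z; lambda) = z_1 + sum_{k=2}^{N+1} (z_k - z_{k-1})/(1 + z_1 + ... + z_{k-1}) with z_{N+1} = e^{lambda}, z_0 = 1, 1 <= z_1 <= ... <= z_N <= e^{lambda}. Then G(N, lambda1) <= G(N, lambda2), i.e., the relaying gain is nondecreasing in lambda for fixed N. -/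
/-- The relaying gain `G(N, λ)`. -/
noncomputable def relayingGain (N : ℕ) (lam : ℝ) : ℝ :=
  Real.exp lam / sInf (attenuationValues N lam)

/-!
Multiplying the relay levels `z₁, …, z_N` (and the endpoint) by `c = e^{λ₂ - λ₁} ≥ 1` while
keeping `z₀ = 1` maps a feasible tuple for `λ₁` to one for `λ₂`; it scales every numerator of
`F_N` by `c` and does not decrease any denominator, so `F_N` grows at most by the factor `c`.
Hence `min F_N(·; λ₂) ≤ e^{λ₂ - λ₁} min F_N(·; λ₁)`, which is the monotonicity of
`G = e^λ / min F_N`.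
-/

open Finset

namespace RelayingGain

/-- The objective `F_N(z)`. -/
noncomputable def attenuation (N : ℕ) (z : ℕ → ℝ) : ℝ :=
  z 1 + ∑ k ∈ Icc 2 (N + 1), (z k - z (k - 1)) / ∑ l ∈ range k, z l

noncomputable def scaleRelays (c : ℝ) (z : ℕ → ℝ) : ℕ → ℝ :=
  fun k => if k = 0 then 1 else c * z k

variable {N : ℕ} {z : ℕ → ℝ}

lemma mem_attenuationValues_iff {lam v : ℝ} :
    v ∈ attenuationValues N lam ↔ ∃ z : ℕ → ℝ, z 0 = 1 ∧ z (N + 1) = Real.exp lam ∧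
      (∀ k ≤ N, z k ≤ z (k + 1)) ∧ v = attenuation N z :=
  Iff.rfl

lemma zero_le_sub_pred (hmono : ∀ k ≤ N, z k ≤ z (k + 1)) {k : ℕ} (hk1 : 1 ≤ k)
    (hkN : k ≤ N + 1) : 0 ≤ z k - z (k - 1) := by
  have h := hmono (k - 1) (by omega)
  rw [Nat.sub_add_cancel hk1] at h
  linarith

lemma one_le_of_chain (hz0 : z 0 = 1) (hmono : ∀ k ≤ N, z k ≤ z (k + 1)) :
    ∀ l ≤ N + 1, 1 ≤ z l := by
  intro l hl
  induction l with
  | zero => exact hz0.ge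
  | succ n ih => exact (ih (by omega)).trans (hmono n (by omega))

lemma one_le_attenuation (hz0 : z 0 = 1) (hmono : ∀ k ≤ N, z k ≤ z (k + 1)) :
    1 ≤ attenuation N z := by
  have hz := one_le_of_chain hz0 hmono
  have hterms : 0 ≤ ∑ k ∈ Icc 2 (N + 1), (z k - z (k - 1)) / ∑ l ∈ range k, z l := by
    refine sum_nonneg fun k hk => ?_
    rw [mem_Icc] at hk
    refine div_nonneg (zero_le_sub_pred hmono (by omega) hk.2) (sum_nonneg fun l hl => ?_)
    exact zero_le_one.trans (hz l (by rw [mem_range] at hl; omega))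
  unfold attenuation
  linarith [hz 1 (by omega)]

section scaleRelays

variable {c : ℝ}

lemma scaleRelays_of_ne_zero {k : ℕ} (hk : k ≠ 0) : scaleRelays c z k = c * z k :=
  if_neg hk

lemma scaleRelays_chain (hc : 1 ≤ c) (hz0 : z 0 = 1) (hmono : ∀ k ≤ N, z k ≤ z (k + 1)) :
    ∀ k ≤ N, scaleRelays c z k ≤ scaleRelays c z (k + 1) := by
  intro k hk
  rw [scaleRelays_of_ne_zero k.succ_ne_zero]
  rcases Nat.eq_zero_or_pos k with rfl | hpos
  · have := one_le_of_chain hz0 hmono 1 (by omega)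
    simp only [scaleRelays, if_true]
    nlinarith
  · rw [scaleRelays_of_ne_zero hpos.ne']
    exact mul_le_mul_of_nonneg_left (hmono k hk) (by linarith)

lemma attenuation_scaleRelays_le (hc : 1 ≤ c) (hz0 : z 0 = 1)
    (hmono : ∀ k ≤ N, z k ≤ z (k + 1)) :
    attenuation N (scaleRelays c z) ≤ c * attenuation N z := by
  have hz := one_le_of_chain hz0 hmono
  have hterm : ∀ k ∈ Icc 2 (N + 1),
      (scaleRelays c z k - scaleRelays c z (k - 1)) / ∑ l ∈ range k, scaleRelays c z l ≤
        c * ((z k - z (k - 1)) / ∑ l ∈ range k, z l) := by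
    intro k hk
    rw [mem_Icc] at hk
    have hden_pos : 0 < ∑ l ∈ range k, z l :=
      sum_pos (fun l hl => zero_lt_one.trans_le (hz l (by rw [mem_range] at hl; omega)))
        (nonempty_range_iff.2 (by omega))
    have hden_le : ∑ l ∈ range k, z l ≤ ∑ l ∈ range k, scaleRelays c z l := by
      refine sum_le_sum fun l hl => ?_
      rcases Nat.eq_zero_or_pos l with rfl | hpos
      · simp [scaleRelays, hz0]
      · rw [scaleRelays_of_ne_zero hpos.ne']
        exact le_mul_of_one_le_left (zero_le_one.trans (hz l (by rw [mem_range] at hl; omega))) hc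
    rw [scaleRelays_of_ne_zero (by omega : k ≠ 0), scaleRelays_of_ne_zero (by omega : k - 1 ≠ 0),
      ← mul_sub, mul_div_assoc]
    exact mul_le_mul_of_nonneg_left
      (div_le_div_of_nonneg_left (zero_le_sub_pred hmono (by omega) hk.2) hden_pos hden_le)
      (by linarith)
  calc attenuation N (scaleRelays c z)
      ≤ c * z 1 + ∑ k ∈ Icc 2 (N + 1), c * ((z k - z (k - 1)) / ∑ l ∈ range k, z l) := by
        rw [attenuation, scaleRelays_of_ne_zero one_ne_zero]
        exact add_le_add_right (sum_le_sum hterm) _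
    _ = c * attenuation N z := by rw [attenuation, mul_add, mul_sum]

end scaleRelays

lemma exists_mem_attenuationValues_le_mul {lam1 lam2 v : ℝ} (h12 : lam1 ≤ lam2)
    (hv : v ∈ attenuationValues N lam1) :
    ∃ w ∈ attenuationValues N lam2, w ≤ Real.exp (lam2 - lam1) * v := by
  obtain ⟨z, hz0, hzN, hmono, rfl⟩ := mem_attenuationValues_iff.1 hv
  have hc : 1 ≤ Real.exp (lam2 - lam1) := Real.one_le_exp (by linarith)
  refine ⟨_, mem_attenuationValues_iff.2 ⟨scaleRelays (Real.exp (lam2 - lam1)) z, rfl, ?_,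
    scaleRelays_chain hc hz0 hmono, rfl⟩, attenuation_scaleRelays_le hc hz0 hmono⟩
  rw [scaleRelays_of_ne_zero N.succ_ne_zero, hzN, ← Real.exp_add, sub_add_cancel]

lemma attenuationValues_nonempty {lam : ℝ} (h : 0 ≤ lam) :
    (attenuationValues N lam).Nonempty := by
  refine ⟨_, mem_attenuationValues_iff.2
    ⟨fun k => if k = 0 then 1 else Real.exp lam, rfl, rfl, fun k _ => ?_, rfl⟩⟩
  by_cases hk : k = 0
  · simp [hk, Real.one_le_exp h]
  · simp [hk]

lemma one_le_of_mem_attenuationValues {lam v : ℝ} (hv : v ∈ attenuationValues N lam) :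
    1 ≤ v := by
  obtain ⟨z, hz0, -, hmono, rfl⟩ := mem_attenuationValues_iff.1 hv
  exact one_le_attenuation hz0 hmono

lemma one_le_sInf_attenuationValues {lam : ℝ} (h : 0 ≤ lam) :
    1 ≤ sInf (attenuationValues N lam) :=
  le_csInf (attenuationValues_nonempty h) fun _ => one_le_of_mem_attenuationValues

lemma sInf_attenuationValues_le_mul {lam1 lam2 : ℝ} (h1 : 0 ≤ lam1) (h12 : lam1 ≤ lam2) :
    sInf (attenuationValues N lam2) ≤
      Real.exp (lam2 - lam1) * sInf (attenuationValues N lam1) := by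
  rw [← div_le_iff₀' (Real.exp_pos _)]
  refine le_csInf (attenuationValues_nonempty h1) fun v hv => ?_
  obtain ⟨w, hw, hwv⟩ := exists_mem_attenuationValues_le_mul h12 hv
  rw [div_le_iff₀' (Real.exp_pos _)]
  exact (csInf_le ⟨1, fun _ => one_le_of_mem_attenuationValues⟩ hw).trans hwv

end RelayingGain

open RelayingGain in
theorem stmt_9_general (N : ℕ) (lam1 lam2 : ℝ)
    (h1 : 0 < lam1) (h12 : lam1 < lam2) :
    relayingGain N lam1 ≤ relayingGain N lam2 := by
  have hm1 := one_le_sInf_attenuationValues (N := N) h1.le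
  have hm2 := one_le_sInf_attenuationValues (N := N) (h1.trans h12).le
  have hscale := sInf_attenuationValues_le_mul (N := N) h1.le h12.le
  have hexp : Real.exp lam2 = Real.exp (lam2 - lam1) * Real.exp lam1 := by
    rw [← Real.exp_add, sub_add_cancel]
  rw [relayingGain, relayingGain, div_le_div_iff₀ (by linarith) (by linarith), hexp]
  calc Real.exp lam1 * sInf (attenuationValues N lam2)
      ≤ Real.exp lam1 * (Real.exp (lam2 - lam1) * sInf (attenuationValues N lam1)) :=
        mul_le_mul_of_nonneg_left hscale (Real.exp_pos lam1).le
    _ = Real.exp (lam2 - lam1) * Real.exp lam1 * sInf (attenuationValues N lam1) := by ring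

theorem stmt_9 (N : ℕ) (hN : 1 ≤ N) (lam1 lam2 : ℝ)
    (h1 : 0 < lam1) (h12 : lam1 < lam2) :
    relayingGain N lam1 ≤ relayingGain N lam2 :=
  stmt_9_general N lam1 lam2 h1 h12
end

section
/- Let a > 1 and define f(N) = a + (a-1)^2 * sum_{k=1}^{N} a^k/(a^{k+1} - 1), where a = e^{rho L/(N+1)} for fixed rho L > 0. Then liminf_{N->infinity} f(N) >= 1 and limsup_{N->infinity} f(N) <= 2 - e^{-rho L}. -/
/-!
In fact `f(N) → 1`. Write `a = exp (c/(N+1))`, so `a → 1` and `a ^ (N+1) = exp c`. Bernoulli's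
inequality `a ^ (k+1) - 1 ≥ (k+1)(a-1)` bounds the `k`-th term of `(a-1)^2 ∑ …` by
`(a-1) a^N / k`, so the whole correction is at most `(a-1) a^N (1 + log N) ≤ c e^c (1 + log N)/(N+1)`,
which tends to `0`.
-/

open Filter Real Finset Topology

/-- Net attenuation when `N` relays are placed uniformly: `a = exp (c/(N+1))`. -/
noncomputable def uniformAttenuation (c : ℝ) (N : ℕ) : ℝ :=
  let a := Real.exp (c / (N + 1))
  a + (a - 1) ^ 2 * ∑ k ∈ Finset.Icc 1 N, a ^ k / (a ^ (k + 1) - 1)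

lemma sq_sub_one_mul_pow_div_pow_succ_sub_one_le {K : Type*} [Field K] [LinearOrder K]
    [IsStrictOrderedRing K] {a : K} (ha : 1 < a) (k : ℕ) :
    (a - 1) ^ 2 * (a ^ k / (a ^ (k + 1) - 1)) ≤ (a - 1) * a ^ k / (k + 1) := by
  have hbernoulli : (k + 1) * (a - 1) ≤ a ^ (k + 1) - 1 := by
    have := one_add_mul_sub_le_pow (by linarith : -1 ≤ a) (k + 1)
    push_cast at this
    linarith
  have hpos : 0 < (k + 1) * (a - 1) := mul_pos (by positivity) (by linarith)
  calc (a - 1) ^ 2 * (a ^ k / (a ^ (k + 1) - 1))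
      ≤ (a - 1) ^ 2 * (a ^ k / ((k + 1) * (a - 1))) := by gcongr
    _ = (a - 1) * a ^ k / (k + 1) := by
      field_simp [(by linarith : a - 1 ≠ 0)]

lemma sq_sub_one_mul_sum_pow_div_pow_succ_sub_one_le {a : ℝ} (ha : 1 < a) (N : ℕ) :
    (a - 1) ^ 2 * ∑ k ∈ Icc 1 N, a ^ k / (a ^ (k + 1) - 1) ≤ (a - 1) * a ^ N * (1 + log N) := by
  have hcoef : 0 ≤ (a - 1) * a ^ N := mul_nonneg (by linarith) (by positivity)
  calc (a - 1) ^ 2 * ∑ k ∈ Icc 1 N, a ^ k / (a ^ (k + 1) - 1)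
      = ∑ k ∈ Icc 1 N, (a - 1) ^ 2 * (a ^ k / (a ^ (k + 1) - 1)) := mul_sum _ _ _
    _ ≤ ∑ k ∈ Icc 1 N, (a - 1) * a ^ N * (k : ℝ)⁻¹ := by
      refine sum_le_sum fun k hk => ?_
      obtain ⟨hk1, hkN⟩ := mem_Icc.mp hk
      have hk : (0 : ℝ) < k := by exact_mod_cast hk1
      refine (sq_sub_one_mul_pow_div_pow_succ_sub_one_le ha k).trans ?_
      rw [div_eq_mul_inv]
      gcongr
      all_goals first | exact ha.le | linarith
    _ = (a - 1) * a ^ N * harmonic N := by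
      rw [← mul_sum, harmonic_eq_sum_Icc]
      push_cast
      rfl
    _ ≤ (a - 1) * a ^ N * (1 + log N) := by
      gcongr
      exact harmonic_le_one_add_log N

lemma Real.exp_sub_one_le_mul_exp (x : ℝ) : exp x - 1 ≤ x * exp x := by
  have h := mul_le_mul_of_nonneg_right (one_sub_le_exp_neg x) (exp_pos x).le
  rw [exp_neg, inv_mul_cancel₀ (exp_ne_zero x)] at h
  linarith

lemma exp_le_uniformAttenuation {c : ℝ} (hc : 0 ≤ c) (N : ℕ) :
    exp (c / (N + 1)) ≤ uniformAttenuation c N := by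
  have ha : 1 ≤ exp (c / (N + 1)) := one_le_exp (by positivity)
  refine le_add_of_nonneg_right (mul_nonneg (sq_nonneg _) (sum_nonneg fun k _ => ?_))
  exact div_nonneg (by positivity) (sub_nonneg.mpr (one_le_pow₀ ha))

lemma uniformAttenuation_le {c : ℝ} (hc : 0 < c) (N : ℕ) :
    uniformAttenuation c N ≤ exp (c / (N + 1)) + c * exp c * ((1 + log N) / (N + 1)) := by
  set x := c / (N + 1) with hx_def
  have hx : 0 < x := by positivity
  have hpow : exp x ^ N * exp x = exp c := by
    rw [← exp_nat_mul, ← exp_add, hx_def]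
    congr 1
    field_simp
  calc uniformAttenuation c N
      ≤ exp x + (exp x - 1) * exp x ^ N * (1 + log N) :=
        add_le_add_right (sq_sub_one_mul_sum_pow_div_pow_succ_sub_one_le (one_lt_exp_iff.mpr hx) N) _
    _ ≤ exp x + x * exp x * exp x ^ N * (1 + log N) := by
        gcongr
        exact exp_sub_one_le_mul_exp x
    _ = exp x + c * exp c * ((1 + log N) / (N + 1)) := by
        rw [mul_assoc x, mul_comm (exp x), hpow, hx_def]
        ring

lemma tendsto_exp_div_natCast_add_one (c : ℝ) :
    Tendsto (fun N : ℕ => exp (c / (N + 1))) atTop (𝓝 1) := by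
  have h : Tendsto (fun N : ℕ => c / ((N : ℝ) + 1)) atTop (𝓝 0) :=
    tendsto_const_nhds.div_atTop (tendsto_atTop_add_const_right _ 1 tendsto_natCast_atTop_atTop)
  simpa [Function.comp_def] using (continuous_exp.tendsto 0).comp h

lemma tendsto_one_add_log_div_add_one :
    Tendsto (fun x : ℝ => (1 + log x) / (x + 1)) atTop (𝓝 0) := by
  have hinv := tendsto_inv_atTop_zero.comp (tendsto_atTop_add_const_right atTop (1 : ℝ) tendsto_id)
  have hlog := tendsto_pow_log_div_mul_add_atTop 1 1 1 one_ne_zero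
  convert hinv.add hlog using 2 with x
  · simp [add_div]
  · simp

theorem tendsto_uniformAttenuation {c : ℝ} (hc : 0 < c) :
    Tendsto (uniformAttenuation c) atTop (𝓝 1) := by
  have hexp := tendsto_exp_div_natCast_add_one c
  have hcorr := (tendsto_one_add_log_div_add_one.comp tendsto_natCast_atTop_atTop).const_mul
    (c * exp c)
  have hupper := hexp.add hcorr
  rw [mul_zero, add_zero] at hupper
  exact tendsto_of_tendsto_of_tendsto_of_le_of_le hexp hupper (exp_le_uniformAttenuation hc.le)
    (uniformAttenuation_le hc)

theorem stmt_10 (c : ℝ) (hc : 0 < c) :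
    1 ≤ Filter.liminf (fun N => uniformAttenuation c N) Filter.atTop ∧
    Filter.limsup (fun N => uniformAttenuation c N) Filter.atTop ≤ 2 - Real.exp (-c) := by
  have h := tendsto_uniformAttenuation hc
  rw [h.liminf_eq, h.limsup_eq]
  have : exp (-c) ≤ 1 := exp_le_one_iff.mpr (by linarith)
  constructor <;> linarith
end

section
/- Let beta > 0, rho > 0, xi > 0 and fix 0 < a < infinity. The expected cost of the stationary policy that always places the next relay at distance a on a line of Exp(beta) length is at most (1/(beta a)) (xi + e^{rho a} - 1) + (e^{rho a} - 1); in particular the optimal value function J_xi(s) of the sequential relay placement MDP satisfies J_xi(s) <= (1/(beta a))(xi + e^{rho a} - 1) + (e^{rho a} - 1) for all s in (0,1]. (Key computational fact: integral_0^infinity beta e^{-beta z} (z/a)(xi + e^{rho a} - 1) dz = (1/(beta a))(xi + e^{rho a} - 1).) -/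
open Real MeasureTheory

/-- State transition of the placement MDP when a relay is placed at distance `a`. -/
noncomputable def nextState (ρ a s : ℝ) : ℝ :=
  s * exp (ρ * a) / (1 + s * exp (ρ * a))

/-- State after `n` relays have been placed (each at distance `a` from the previous). -/
noncomputable def stateIter (ρ a s : ℝ) (n : ℕ) : ℝ :=
  (nextState ρ a)^[n] s

/-- Total cost along a line of realized length `l` under the stationary policy placing
each successive relay at distance `a`, starting from state `s`:
`⌊l/a⌋` relays are placed (cost `ξ + s_k (e^{ρa}-1)` each) and then the sink is placed. -/
noncomputable def stationaryPolicyCost (ρ ξ a s l : ℝ) : ℝ :=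
  let n := ⌊l / a⌋₊
  n * ξ + (∑ k ∈ Finset.range n, stateIter ρ a s k) * (exp (ρ * a) - 1) +
    stateIter ρ a s n * (exp (ρ * (l - n * a)) - 1)

open Set

/-!
Placing a relay every `a` units along a line of length `l` costs at most `ξ + e^{ρa} - 1` per
relay (the states stay in `[0, 1]`), `⌊l / a⌋ ≤ l / a` relays are placed, and the final hop
costs at most `e^{ρa} - 1`. Integrating this affine bound against the `Exp(β)` density, whose
mean is `1 / β`, gives the bound on `J`.
-/

lemma nextState_mem_Icc (ρ a : ℝ) {s : ℝ} (hs : 0 ≤ s) : nextState ρ a s ∈ Icc 0 1 := by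
  have hden : 0 < 1 + s * exp (ρ * a) := by positivity
  refine ⟨by unfold nextState; positivity, ?_⟩
  rw [nextState, div_le_one hden]
  linarith

lemma stateIter_mem_Icc (ρ a : ℝ) {s : ℝ} (hs : s ∈ Icc (0 : ℝ) 1) (n : ℕ) :
    stateIter ρ a s n ∈ Icc 0 1 :=
  (MapsTo.iterate (fun _ ht => nextState_mem_Icc ρ a ht.1) n) hs

lemma sub_floor_div_mul_mem_Icc {l a : ℝ} (hl : 0 ≤ l) (ha : 0 < a) :
    l - ⌊l / a⌋₊ * a ∈ Icc 0 a := by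
  have hle : (⌊l / a⌋₊ : ℝ) ≤ l / a := Nat.floor_le (by positivity)
  have hlt : l / a < ⌊l / a⌋₊ + 1 := Nat.lt_floor_add_one _
  rw [le_div_iff₀ ha] at hle
  rw [div_lt_iff₀ ha] at hlt
  constructor <;> linarith

section stationaryPolicyCost

variable {ρ ξ a s l : ℝ} (hρ : 0 ≤ ρ) (ha : 0 < a) (hs : s ∈ Icc (0 : ℝ) 1) (hl : 0 ≤ l)
include hρ ha hs hl

lemma stationaryPolicyCost_nonneg (hξ : 0 ≤ ξ) : 0 ≤ stationaryPolicyCost ρ ξ a s l := by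
  have hlast := sub_floor_div_mul_mem_Icc hl ha
  have hstep : 0 ≤ exp (ρ * a) - 1 := by simp only [sub_nonneg, one_le_exp_iff]; positivity
  have hfinal : 0 ≤ exp (ρ * (l - ⌊l / a⌋₊ * a)) - 1 := by
    simp only [sub_nonneg, one_le_exp_iff]; exact mul_nonneg hρ hlast.1
  have hsum : 0 ≤ ∑ k ∈ Finset.range ⌊l / a⌋₊, stateIter ρ a s k :=
    Finset.sum_nonneg fun k _ => (stateIter_mem_Icc ρ a hs k).1
  have hsn := (stateIter_mem_Icc ρ a hs ⌊l / a⌋₊).1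
  unfold stationaryPolicyCost
  positivity

lemma stationaryPolicyCost_le (hξ : 0 ≤ ξ) :
    stationaryPolicyCost ρ ξ a s l ≤ l / a * (ξ + exp (ρ * a) - 1) + (exp (ρ * a) - 1) := by
  set n := ⌊l / a⌋₊
  have hlast := sub_floor_div_mul_mem_Icc hl ha
  have hstep : 0 ≤ exp (ρ * a) - 1 := by simp only [sub_nonneg, one_le_exp_iff]; positivity
  have hsum : ∑ k ∈ Finset.range n, stateIter ρ a s k ≤ n := by
    simpa using Finset.sum_le_sum fun k (_ : k ∈ Finset.range n) => (stateIter_mem_Icc ρ a hs k).2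
  have hsn := stateIter_mem_Icc ρ a hs n
  have hn : (n : ℝ) ≤ l / a := Nat.floor_le (by positivity)
  have hlast_cost : stateIter ρ a s n * (exp (ρ * (l - n * a)) - 1) ≤ exp (ρ * a) - 1 := by
    have hfinal_nonneg : 0 ≤ exp (ρ * (l - n * a)) - 1 := by
      simp only [sub_nonneg, one_le_exp_iff]; exact mul_nonneg hρ hlast.1
    have hfinal_le : exp (ρ * (l - n * a)) - 1 ≤ exp (ρ * a) - 1 := by
      gcongr; exact hlast.2
    calc _ ≤ 1 * (exp (ρ * (l - n * a)) - 1) := mul_le_mul_of_nonneg_right hsn.2 hfinal_nonneg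
      _ ≤ _ := by rwa [one_mul]
  calc stationaryPolicyCost ρ ξ a s l
      ≤ n * ξ + n * (exp (ρ * a) - 1) + (exp (ρ * a) - 1) := by
        have hsum_cost := mul_le_mul_of_nonneg_right hsum hstep
        dsimp only [stationaryPolicyCost]
        linarith
    _ = n * (ξ + exp (ρ * a) - 1) + (exp (ρ * a) - 1) := by ring
    _ ≤ l / a * (ξ + exp (ρ * a) - 1) + (exp (ρ * a) - 1) := by gcongr; linarith

end stationaryPolicyCost

section ExponentialDensity

variable {β : ℝ} (hβ : 0 < β)
include hβ

lemma integral_mul_exp_neg_mul_Ioi : ∫ z in Ioi (0 : ℝ), z * exp (-β * z) = 1 / β ^ 2 := by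
  have h := integral_rpow_mul_exp_neg_mul_Ioi two_pos hβ
  rw [Gamma_two, mul_one, rpow_two, div_pow, one_pow] at h
  rw [← h]
  refine setIntegral_congr_fun measurableSet_Ioi fun z _ => ?_
  norm_num

lemma integral_exp_neg_mul_Ioi : ∫ z in Ioi (0 : ℝ), exp (-β * z) = 1 / β := by
  have h := integral_rpow_mul_exp_neg_mul_Ioi one_pos hβ
  rw [Gamma_one, mul_one, rpow_one] at h
  rw [← h]
  refine setIntegral_congr_fun measurableSet_Ioi fun z _ => ?_
  simp

lemma integrableOn_mul_exp_neg_mul_Ioi : IntegrableOn (fun z : ℝ => z * exp (-β * z)) (Ioi 0) := by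
  simpa using integrableOn_rpow_mul_exp_neg_mul_rpow (s := 1) (p := 1) (by norm_num) one_pos hβ

lemma integrableOn_exp_density_mul_affine (c d : ℝ) :
    IntegrableOn (fun z => β * exp (-β * z) * (c * z + d)) (Ioi 0) := by
  have hsplit : (fun z => β * exp (-β * z) * (c * z + d))
      = fun z => β * c * (z * exp (-β * z)) + β * d * exp (-β * z) := by
    funext z; ring
  rw [IntegrableOn, hsplit]
  exact ((integrableOn_mul_exp_neg_mul_Ioi hβ).const_mul _).add
    ((exp_neg_integrableOn_Ioi 0 hβ).const_mul _)

lemma integral_exp_density_mul_affine (c d : ℝ) :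
    ∫ z in Ioi (0 : ℝ), β * exp (-β * z) * (c * z + d) = c / β + d := by
  have hsplit : (fun z => β * exp (-β * z) * (c * z + d))
      = fun z => β * c * (z * exp (-β * z)) + β * d * exp (-β * z) := by
    funext z; ring
  rw [hsplit, integral_add ((integrableOn_mul_exp_neg_mul_Ioi hβ).const_mul _)
    ((exp_neg_integrableOn_Ioi 0 hβ).const_mul _), integral_const_mul, integral_const_mul,
    integral_mul_exp_neg_mul_Ioi hβ, integral_exp_neg_mul_Ioi hβ]
  field_simp

lemma integral_exp_density_mul_stationaryPolicyCost_le {ρ ξ a s : ℝ} (hρ : 0 ≤ ρ) (hξ : 0 ≤ ξ)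
    (ha : 0 < a) (hs : s ∈ Icc (0 : ℝ) 1) :
    ∫ l in Ioi (0 : ℝ), β * exp (-β * l) * stationaryPolicyCost ρ ξ a s l ≤
      ∫ l in Ioi (0 : ℝ), β * exp (-β * l) *
        ((ξ + exp (ρ * a) - 1) / a * l + (exp (ρ * a) - 1)) := by
  refine integral_mono_of_nonneg ?_ (integrableOn_exp_density_mul_affine hβ _ _) ?_
  all_goals
    refine (ae_restrict_iff' measurableSet_Ioi).2 (ae_of_all _ fun l hl => ?_)
    have hdensity : 0 ≤ β * exp (-β * l) := by positivity
  · exact mul_nonneg hdensity (stationaryPolicyCost_nonneg hρ ha hs (le_of_lt hl) hξ)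
  · refine mul_le_mul_of_nonneg_left ?_ hdensity
    exact (stationaryPolicyCost_le hρ ha hs (le_of_lt hl) hξ).trans_eq (by ring)

end ExponentialDensity

theorem stmt_16 (β ρ ξ a : ℝ) (hβ : 0 < β) (hρ : 0 < ρ) (hξ : 0 < ξ) (ha : 0 < a)
    (J : ℝ → ℝ)
    -- the optimal value function is bounded by the expected cost of any policy,
    -- in particular by that of the stationary policy with step `a`:
    (hJ : ∀ s ∈ Set.Ioc (0 : ℝ) 1,
      J s ≤ ∫ l in Set.Ioi (0 : ℝ), β * exp (-β * l) * stationaryPolicyCost ρ ξ a s l) :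
    (∫ z in Set.Ioi (0 : ℝ), β * exp (-β * z) * ((z / a) * (ξ + exp (ρ * a) - 1)) =
      (1 / (β * a)) * (ξ + exp (ρ * a) - 1)) ∧
    ∀ s ∈ Set.Ioc (0 : ℝ) 1,
      J s ≤ (1 / (β * a)) * (ξ + exp (ρ * a) - 1) + (exp (ρ * a) - 1) := by
  set C := ξ + exp (ρ * a) - 1
  have hmean : ∀ d, ∫ z in Ioi (0 : ℝ), β * exp (-β * z) * (C / a * z + d)
      = 1 / (β * a) * C + d := fun d => by
    rw [integral_exp_density_mul_affine hβ]
    field_simp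
  refine ⟨?_, fun s hs => ?_⟩
  · rw [← add_zero (1 / (β * a) * C), ← hmean 0]
    congr 1; funext z; ring
  calc J s ≤ _ := hJ s hs
    _ ≤ _ := integral_exp_density_mul_stationaryPolicyCost_le hβ hρ.le hξ.le ha
        (Ioc_subset_Icc_self hs)
    _ = _ := hmean _
end

section
/- For fixed a >= 0, the map s -> s e^{rho a}/(1 + s e^{rho a}) on (0,1] is increasing and concave in s; consequently, if J: (0,1] -> R is concave and increasing, then s -> J(s e^{rho a}/(1 + s e^{rho a})) is concave and increasing, and hence the Bellman operator of the sequential relay placement MDP (taking pointwise infimum over a of integral_0^a beta e^{-beta z} s(e^{rho z}-1) dz + e^{-beta a}(s(e^{rho a}-1) + xi + J(s e^{rho a}/(1+s e^{rho a})))) maps concave increasing functions to concave increasing functions. -/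
open Real MeasureTheory

/-- Bellman operator of the sequential relay placement MDP. -/
noncomputable def bellmanOp (β ρ ξ : ℝ) (J : ℝ → ℝ) (s : ℝ) : ℝ :=
  sInf ((fun a =>
    (∫ z in Set.Ioc (0 : ℝ) a, β * exp (-β * z) * (s * (exp (ρ * z) - 1))) +
      exp (-β * a) * (s * (exp (ρ * a) - 1) + ξ +
        J (s * exp (ρ * a) / (1 + s * exp (ρ * a))))) '' Set.Ici 0)


lemma gmap {c s : ℝ} (hc : 0 < c) (hs : s ∈ Set.Ioc (0:ℝ) 1) :
    s * c / (1 + s * c) ∈ Set.Ioc (0:ℝ) 1 := by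
  have h1 : 0 < 1 + s * c := by nlinarith [hs.1]
  constructor
  · exact div_pos (mul_pos hs.1 hc) h1
  · rw [div_le_one h1]; nlinarith [hs.1]

lemma gmono {c : ℝ} (hc : 0 < c) :
    MonotoneOn (fun s : ℝ => s * c / (1 + s * c)) (Set.Ioc 0 1) := by
  intro x hx y hy hxy
  have h1 : 0 < 1 + x * c := by nlinarith [hx.1]
  have h2 : 0 < 1 + y * c := by nlinarith [hy.1]
  simp only
  rw [div_le_div_iff₀ h1 h2]
  nlinarith

lemma gconc {c : ℝ} (hc : 0 < c) :
    ConcaveOn ℝ (Set.Ioc 0 1) (fun s : ℝ => s * c / (1 + s * c)) := by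
  refine ⟨convex_Ioc 0 1, ?_⟩
  intro x hx y hy a b ha hb hab
  have h1 : 0 < 1 + x * c := by nlinarith [hx.1]
  have h2 : 0 < 1 + y * c := by nlinarith [hy.1]
  have hm : 0 ≤ a * x + b * y := add_nonneg (mul_nonneg ha hx.1.le) (mul_nonneg hb hy.1.le)
  have h3 : 0 < 1 + (a * x + b * y) * c := by nlinarith [mul_nonneg hm hc.le]
  simp only [smul_eq_mul, mul_div_assoc']
  rw [div_add_div _ _ h1.ne' h2.ne', div_le_div_iff₀ (mul_pos h1 h2) h3]
  have hb' : b = 1 - a := by linarith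
  subst hb'
  nlinarith [mul_nonneg (mul_nonneg ha hb) (sq_nonneg (x * c - y * c))]

lemma g_ge {c s : ℝ} (hc : 1 ≤ c) (hs : 0 < s) :
    s / (1 + s) ≤ s * c / (1 + s * c) := by
  have h1 : 0 < 1 + s := by linarith
  have h2 : 0 < 1 + s * c := by nlinarith
  rw [div_le_div_iff₀ h1 h2]
  nlinarith

lemma compMono {J : ℝ → ℝ} (hJm : MonotoneOn J (Set.Ioc 0 1)) {c : ℝ} (hc : 0 < c) :
    MonotoneOn (fun s : ℝ => J (s * c / (1 + s * c))) (Set.Ioc 0 1) :=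
  fun x hx y hy hxy => hJm (gmap hc hx) (gmap hc hy) (gmono hc hx hy hxy)

lemma compConc {J : ℝ → ℝ} (hJm : MonotoneOn J (Set.Ioc 0 1))
    (hJc : ConcaveOn ℝ (Set.Ioc 0 1) J) {c : ℝ} (hc : 0 < c) :
    ConcaveOn ℝ (Set.Ioc 0 1) (fun s : ℝ => J (s * c / (1 + s * c))) := by
  refine ⟨convex_Ioc 0 1, ?_⟩
  intro x hx y hy a b ha hb hab
  have hgx := gmap hc hx
  have hgy := gmap hc hy
  have hmid : a • x + b • y ∈ Set.Ioc (0:ℝ) 1 := (convex_Ioc 0 1) hx hy ha hb hab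
  have hcomb : a • (x * c / (1 + x * c)) + b • (y * c / (1 + y * c)) ∈ Set.Ioc (0:ℝ) 1 :=
    (convex_Ioc 0 1) hgx hgy ha hb hab
  have h1 := hJc.2 hgx hgy ha hb hab
  have h2 := (gconc hc).2 hx hy ha hb hab
  have h3 := hJm hcomb (gmap hc hmid) h2
  exact h1.trans h3

noncomputable def Fb (β ρ ξ : ℝ) (J : ℝ → ℝ) (s a : ℝ) : ℝ :=
  (∫ z in Set.Ioc (0 : ℝ) a, β * exp (-β * z) * (s * (exp (ρ * z) - 1))) +
    exp (-β * a) * (s * (exp (ρ * a) - 1) + ξ +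
      J (s * exp (ρ * a) / (1 + s * exp (ρ * a))))

lemma Fb_eq (β ρ ξ : ℝ) (J : ℝ → ℝ) (s a : ℝ) :
    Fb β ρ ξ J s a =
      s * (∫ z in Set.Ioc (0 : ℝ) a, β * exp (-β * z) * (exp (ρ * z) - 1)) +
        exp (-β * a) * (s * (exp (ρ * a) - 1) + ξ +
          J (s * exp (ρ * a) / (1 + s * exp (ρ * a)))) := by
  unfold Fb
  congr 1
  rw [← integral_const_mul]
  congr 1
  ext z
  ring

lemma E_nonneg {β ρ : ℝ} (hβ : 0 < β) (hρ : 0 < ρ) (a : ℝ) :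
    0 ≤ ∫ z in Set.Ioc (0 : ℝ) a, β * exp (-β * z) * (exp (ρ * z) - 1) := by
  apply setIntegral_nonneg measurableSet_Ioc
  intro z hz
  have h1 : (1:ℝ) ≤ exp (ρ * z) := by
    rw [← exp_zero]
    exact exp_le_exp.mpr (by nlinarith [hz.1])
  have h2 : 0 < exp (-β * z) := exp_pos _
  exact mul_nonneg (mul_nonneg hβ.le h2.le) (by linarith)

lemma Fb_mono {β ρ ξ : ℝ} (hβ : 0 < β) (hρ : 0 < ρ) {J : ℝ → ℝ}
    (hJm : MonotoneOn J (Set.Ioc 0 1)) {a : ℝ} (ha : 0 ≤ a)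
    {x y : ℝ} (hx : x ∈ Set.Ioc (0:ℝ) 1) (hy : y ∈ Set.Ioc (0:ℝ) 1) (hxy : x ≤ y) :
    Fb β ρ ξ J x a ≤ Fb β ρ ξ J y a := by
  rw [Fb_eq, Fb_eq]
  have hc : (1:ℝ) ≤ exp (ρ * a) := by
    rw [← exp_zero]; exact exp_le_exp.mpr (by nlinarith)
  have hcpos : (0:ℝ) < exp (ρ * a) := exp_pos _
  have hE := E_nonneg hβ hρ a
  have hJg : J (x * exp (ρ * a) / (1 + x * exp (ρ * a))) ≤
      J (y * exp (ρ * a) / (1 + y * exp (ρ * a))) :=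
    hJm (gmap hcpos hx) (gmap hcpos hy) (gmono hcpos hx hy hxy)
  have he : (0:ℝ) < exp (-β * a) := exp_pos _
  have h1 : x * (∫ z in Set.Ioc (0 : ℝ) a, β * exp (-β * z) * (exp (ρ * z) - 1)) ≤
      y * (∫ z in Set.Ioc (0 : ℝ) a, β * exp (-β * z) * (exp (ρ * z) - 1)) :=
    mul_le_mul_of_nonneg_right hxy hE
  have h2 : x * (exp (ρ * a) - 1) + ξ + J (x * exp (ρ * a) / (1 + x * exp (ρ * a))) ≤
      y * (exp (ρ * a) - 1) + ξ + J (y * exp (ρ * a) / (1 + y * exp (ρ * a))) := by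
    nlinarith
  nlinarith [mul_le_mul_of_nonneg_left h2 he.le]

lemma Fb_conc {β ρ ξ : ℝ} (hβ : 0 < β) (hρ : 0 < ρ) {J : ℝ → ℝ}
    (hJm : MonotoneOn J (Set.Ioc 0 1)) (hJc : ConcaveOn ℝ (Set.Ioc 0 1) J)
    {a : ℝ} (ha : 0 ≤ a)
    {x y p q : ℝ} (hx : x ∈ Set.Ioc (0:ℝ) 1) (hy : y ∈ Set.Ioc (0:ℝ) 1)
    (hp : 0 ≤ p) (hq : 0 ≤ q) (hpq : p + q = 1) :
    p * Fb β ρ ξ J x a + q * Fb β ρ ξ J y a ≤ Fb β ρ ξ J (p * x + q * y) a := by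
  rw [Fb_eq, Fb_eq, Fb_eq]
  have hcpos : (0:ℝ) < exp (ρ * a) := exp_pos _
  have he : (0:ℝ) < exp (-β * a) := exp_pos _
  have hJ := (compConc hJm hJc hcpos).2 hx hy hp hq hpq
  simp only [smul_eq_mul] at hJ
  have hq' : q = 1 - p := by linarith
  subst hq'
  nlinarith [mul_le_mul_of_nonneg_left hJ he.le]

lemma Fb_lb {β ρ ξ : ℝ} (hβ : 0 < β) (hρ : 0 < ρ) (hξ : 0 < ξ) {J : ℝ → ℝ}
    (hJm : MonotoneOn J (Set.Ioc 0 1)) {s : ℝ} (hs : s ∈ Set.Ioc (0:ℝ) 1)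
    {a : ℝ} (ha : 0 ≤ a) :
    min (J (s / (1 + s))) 0 ≤ Fb β ρ ξ J s a := by
  rw [Fb_eq]
  have hc : (1:ℝ) ≤ exp (ρ * a) := by
    rw [← exp_zero]; exact exp_le_exp.mpr (by nlinarith)
  have hcpos : (0:ℝ) < exp (ρ * a) := exp_pos _
  have he : (0:ℝ) < exp (-β * a) := exp_pos _
  have he1 : exp (-β * a) ≤ 1 := by
    rw [← exp_zero]; exact exp_le_exp.mpr (by nlinarith)
  have hE := E_nonneg hβ hρ a
  have hbase : s / (1 + s) ∈ Set.Ioc (0:ℝ) 1 := by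
    have h1 : 0 < 1 + s := by nlinarith [hs.1]
    exact ⟨div_pos hs.1 h1, by rw [div_le_one h1]; linarith⟩
  have hJg : J (s / (1 + s)) ≤ J (s * exp (ρ * a) / (1 + s * exp (ρ * a))) :=
    hJm hbase (gmap hcpos hs) (g_ge hc hs.1)
  set Jg := J (s * exp (ρ * a) / (1 + s * exp (ρ * a))) with hJgdef
  have key : min (J (s / (1 + s))) 0 ≤ exp (-β * a) * Jg := by
    rcases le_or_gt 0 Jg with h | h
    · exact le_trans (min_le_right _ _) (mul_nonneg he.le h)
    · refine le_trans (min_le_left _ _) ?_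
      nlinarith
  have h1 : 0 ≤ s * (∫ z in Set.Ioc (0 : ℝ) a, β * exp (-β * z) * (exp (ρ * z) - 1)) :=
    mul_nonneg hs.1.le hE
  nlinarith [mul_pos he hξ, mul_nonneg he.le (mul_nonneg hs.1.le (by linarith : (0:ℝ) ≤ exp (ρ * a) - 1))]

theorem stmt_17 (β ρ ξ : ℝ) (hβ : 0 < β) (hρ : 0 < ρ) (hξ : 0 < ξ) :
    (∀ a : ℝ, 0 ≤ a →
      MonotoneOn (fun s : ℝ => s * exp (ρ * a) / (1 + s * exp (ρ * a)))
        (Set.Ioc (0 : ℝ) 1) ∧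
      ConcaveOn ℝ (Set.Ioc (0 : ℝ) 1)
        (fun s : ℝ => s * exp (ρ * a) / (1 + s * exp (ρ * a)))) ∧
    ∀ J : ℝ → ℝ, MonotoneOn J (Set.Ioc (0 : ℝ) 1) → ConcaveOn ℝ (Set.Ioc (0 : ℝ) 1) J →
      ((∀ a : ℝ, 0 ≤ a →
        MonotoneOn (fun s : ℝ => J (s * exp (ρ * a) / (1 + s * exp (ρ * a))))
          (Set.Ioc (0 : ℝ) 1) ∧
        ConcaveOn ℝ (Set.Ioc (0 : ℝ) 1)
          (fun s : ℝ => J (s * exp (ρ * a) / (1 + s * exp (ρ * a))))) ∧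
      MonotoneOn (bellmanOp β ρ ξ J) (Set.Ioc (0 : ℝ) 1) ∧
      ConcaveOn ℝ (Set.Ioc (0 : ℝ) 1) (bellmanOp β ρ ξ J)) := by
  refine ⟨fun a _ => ⟨gmono (exp_pos (ρ * a)), gconc (exp_pos (ρ * a))⟩, ?_⟩
  intro J hJm hJc
  have hbell : ∀ s : ℝ, bellmanOp β ρ ξ J s =
      sInf ((fun a => Fb β ρ ξ J s a) '' Set.Ici 0) := fun s => rfl
  have hne : ∀ s : ℝ, ((fun a => Fb β ρ ξ J s a) '' Set.Ici 0).Nonempty :=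
    fun s => Set.Nonempty.image _ ⟨0, Set.self_mem_Ici⟩
  have hbdd : ∀ s ∈ Set.Ioc (0:ℝ) 1,
      BddBelow ((fun a => Fb β ρ ξ J s a) '' Set.Ici 0) := by
    intro s hs
    refine ⟨min (J (s / (1 + s))) 0, ?_⟩
    rintro v ⟨a, ha, rfl⟩
    exact Fb_lb hβ hρ hξ hJm hs ha
  refine ⟨fun a _ => ⟨compMono hJm (exp_pos (ρ * a)), compConc hJm hJc (exp_pos (ρ * a))⟩,
    ?_, ?_⟩
  · intro x hx y hy hxy
    rw [hbell, hbell]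
    apply le_csInf (hne y)
    rintro v ⟨a, ha, rfl⟩
    exact le_trans (csInf_le (hbdd x hx) ⟨a, ha, rfl⟩) (Fb_mono hβ hρ hJm ha hx hy hxy)
  · refine ⟨convex_Ioc 0 1, ?_⟩
    intro x hx y hy p q hp hq hpq
    simp only [smul_eq_mul]
    rw [hbell, hbell, hbell]
    apply le_csInf (hne _)
    rintro v ⟨a, ha, rfl⟩
    have h1 : sInf ((fun a => Fb β ρ ξ J x a) '' Set.Ici 0) ≤ Fb β ρ ξ J x a :=
      csInf_le (hbdd x hx) ⟨a, ha, rfl⟩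
    have h2 : sInf ((fun a => Fb β ρ ξ J y a) '' Set.Ici 0) ≤ Fb β ρ ξ J y a :=
      csInf_le (hbdd y hy) ⟨a, ha, rfl⟩
    have h3 := Fb_conc (ξ := ξ) hβ hρ hJm hJc ha hx hy hp hq hpq
    calc p * sInf ((fun a => Fb β ρ ξ J x a) '' Set.Ici 0) +
          q * sInf ((fun a => Fb β ρ ξ J y a) '' Set.Ici 0)
        ≤ p * Fb β ρ ξ J x a + q * Fb β ρ ξ J y a :=
          add_le_add (mul_le_mul_of_nonneg_left h1 hp) (mul_le_mul_of_nonneg_left h2 hq)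
      _ ≤ Fb β ρ ξ J (p * x + q * y) a := h3
end
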